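/- arXiv:2005.01671 — 2 statements merged into one kernel-verified Lean document; each statement's English description precedes it below -/
import Mathlib

section
/- (Finite-time parameter recovery under interval excitation.) Let γ > 0, μ ∈ (0,1), t_c > 0, Δ : ℝ≥0 → ℝ continuous with ∫₀^{t_c} Δ(s)²ds ≥ −(1/γ)ln(1 − μ), and θ ∈ ℝⁿ constant. Suppose θ̂ and ω satisfy θ̂̇(t) = γΔ(t)²(θ − θ̂(t)), ω̇(t) = −γΔ(t)²ω(t), ω(0) = 1. Then for all t ≥ t_c one has ω(t) ≤ 1 − μ and θ = (1/(1 − ω(t)))[θ̂(t) − ω(t)θ̂(0)]. -/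
/-!
Both `ω` and the estimation error `θ - θ̂` solve the same linear equation `ẋ = -γΔ²x`, so each
is its initial value times `exp (-γ ∫₀ᵗ Δ²)`. Hence `ω(t) = exp (-γ ∫₀ᵗ Δ²)`, which for `t ≥ t_c`
is at most `1 - μ` by the excitation assumption, and `θ - θ̂(t) = ω(t) (θ - θ̂(0))`, which can be
solved for `θ` as soon as `ω(t) ≠ 1`.
-/

open Real intervalIntegral

theorem eq_exp_neg_integral_smul_of_hasDerivAt {E : Type*} [NormedAddCommGroup E]
    [NormedSpace ℝ E] {a : ℝ → ℝ} (ha : Continuous a) {f : ℝ → E}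
    (hf : ∀ t ≥ (0:ℝ), HasDerivAt f (-a t • f t) t) :
    ∀ t ≥ (0:ℝ), f t = exp (-∫ s in (0:ℝ)..t, a s) • f 0 := by
  set A : ℝ → ℝ := fun t => ∫ s in (0:ℝ)..t, a s
  have hA : ∀ t, HasDerivAt A (a t) t := fun t => (ha.integral_hasStrictDerivAt 0 t).hasDerivAt
  have hderiv : ∀ t ≥ (0:ℝ), HasDerivAt (fun t => exp (A t) • f t) 0 t := by
    intro t ht
    convert (hA t).exp.fun_smul (hf t ht) using 1
    rw [smul_smul, ← add_smul]
    ring_nf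
    simp
  intro t ht
  have hconst := constant_of_has_deriv_right_zero
    (fun x hx => (hderiv x hx.1).continuousAt.continuousWithinAt)
    (fun x hx => (hderiv x hx.1).hasDerivWithinAt) t ⟨ht, le_rfl⟩
  simp only [A, integral_same, exp_zero, one_smul] at hconst
  rw [← hconst, smul_smul, ← exp_add, neg_add_cancel, exp_zero, one_smul]

theorem exp_neg_mul_le_of_neg_inv_mul_log_le {γ y I : ℝ} (hγ : 0 < γ) (hy : 0 < y)
    (hI : -(1 / γ) * log y ≤ I) : exp (-(γ * I)) ≤ y := by
  rw [← le_log_iff_exp_le hy]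
  have := mul_le_mul_of_nonneg_left hI hγ.le
  rw [← mul_assoc, mul_neg, mul_one_div_cancel hγ.ne'] at this
  linarith

theorem eq_inv_one_sub_smul_of_sub_eq_smul_sub {K V : Type*} [Field K] [AddCommGroup V]
    [Module K V] {x y z : V} {w : K} (hw : w ≠ 1) (h : x - y = w • (x - z)) :
    x = (1 - w)⁻¹ • (y - w • z) := by
  have h1 : (1 - w) • x = y - w • z := by linear_combination (norm := module) h
  rw [← h1, smul_smul, inv_mul_cancel₀ (sub_ne_zero.mpr hw.symm), one_smul]

/-- Finite-time parameter recovery under interval excitation. If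
`∫₀^{t_c}Δ² ≥ −(1/γ)ln(1 − μ)`, `θ̂̇ = γΔ²(θ − θ̂)`, `ω̇ = −γΔ²ω`, `ω(0) = 1`, then for
all `t ≥ t_c` one has `ω(t) ≤ 1 − μ` and `θ = (1/(1 − ω(t)))[θ̂(t) − ω(t)θ̂(0)]`. -/
theorem fct_parameter_recovery {n : ℕ}
    (γ μ tc : ℝ) (hγ : 0 < γ) (hμ : μ ∈ Set.Ioo (0:ℝ) 1) (htc : 0 < tc)
    (Δ : ℝ → ℝ) (hΔ : Continuous Δ)
    (hexc : -(1 / γ) * Real.log (1 - μ) ≤ ∫ s in (0:ℝ)..tc, (Δ s) ^ 2)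
    (θ : Fin n → ℝ) (θh : ℝ → Fin n → ℝ) (ω : ℝ → ℝ)
    (hθh : ∀ t ≥ (0:ℝ), HasDerivAt θh ((γ * (Δ t) ^ 2) • (θ - θh t)) t)
    (hω : ∀ t ≥ (0:ℝ), HasDerivAt ω (-(γ * (Δ t) ^ 2) * ω t) t)
    (hω0 : ω 0 = 1) :
    ∀ t ≥ tc, ω t ≤ 1 - μ ∧ θ = (1 - ω t)⁻¹ • (θh t - ω t • θh 0) := by
  intro t ht
  have ht0 : 0 ≤ t := htc.le.trans ht
  have hγΔ : Continuous fun s => γ * Δ s ^ 2 := by fun_prop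
  have hω_exp : ω t = exp (-(γ * ∫ s in (0:ℝ)..t, Δ s ^ 2)) := by
    rw [← integral_const_mul, eq_exp_neg_integral_smul_of_hasDerivAt hγΔ hω t ht0, hω0,
      smul_eq_mul, mul_one]
  have herr : θ - θh t = ω t • (θ - θh 0) := by
    have hderiv : ∀ s ≥ (0:ℝ), HasDerivAt (fun s => θ - θh s)
        (-(γ * Δ s ^ 2) • (θ - θh s)) s := fun s hs => by
      simpa only [zero_sub, neg_smul] using (hasDerivAt_const s θ).fun_sub (hθh s hs)
    rw [eq_exp_neg_integral_smul_of_hasDerivAt hγΔ hderiv t ht0, hω_exp, integral_const_mul]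
  have hωle : ω t ≤ 1 - μ := by
    have hexc_t : ∫ s in (0:ℝ)..tc, Δ s ^ 2 ≤ ∫ s in (0:ℝ)..t, Δ s ^ 2 :=
      integral_mono_interval le_rfl htc.le ht (.of_forall fun s => sq_nonneg (Δ s))
        ((by fun_prop : Continuous fun s => Δ s ^ 2).intervalIntegrable 0 t)
    rw [hω_exp]
    exact exp_neg_mul_le_of_neg_inv_mul_log_le hγ (by linarith [hμ.2]) (hexc.trans hexc_t)
  exact ⟨hωle, eq_inv_one_sub_smul_of_sub_eq_smul_sub (by linarith [hμ.1]) herr⟩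
end

section
/- (Exponential convergence of the open-loop emulator.) Let Jᵢ = −Jᵢᵀ ∈ ℝ^{n×n} (i = 0,…,m) skew-symmetric, R = Rᵀ > 0, Q > 0 diagonal, E ∈ ℝⁿ, u : ℝ≥0 → ℝᵐ continuous, and let x, ξ : ℝ≥0 → ℝⁿ both be differentiable solutions of ż(t) = (J₀ + Σᵢ₌₁ᵐ Jᵢuᵢ(t) − R)Qz(t) + (G₀ + Σᵢ₌₁ᵐ Gᵢuᵢ(t))E. Then there exist constants K > 0 and α > 0, depending only on Q and R, such that |x(t) − ξ(t)| ≤ K e^{−αt}|x(0) − ξ(0)| for all t ≥ 0. -/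
/-!
The error `e = x - ξ` solves `ė = (S t - R) Q e` with `S t = J₀ + ∑ uᵢ(t) Jᵢ` skew-symmetric, so
along it the Lyapunov function `V = eᵀ Q e` has `V̇ = -2 (Q e)ᵀ R (Q e)`: the skew part drops out.
Compactness of the unit sphere gives `c, q, C > 0` with `(Q e)ᵀ R (Q e) ≥ c |e|²` and
`q |e|² ≤ V ≤ C |e|²`, so `V̇ ≤ -2 (c / C) V`. Grönwall then gives `V t ≤ exp (-2 c t / C) V 0`,
whence `|e t| ≤ √(C / q) exp (-c t / C) |e 0|`.
-/

open Matrix Real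

section Homogeneous

variable {E : Type*} [NormedAddCommGroup E] [NormedSpace ℝ E] {f : E → ℝ}

lemma eq_norm_sq_mul_of_homogeneous (hf : ∀ (c : ℝ) v, f (c • v) = c ^ 2 * f v) (v : E) :
    f v = ‖v‖ ^ 2 * f (‖v‖⁻¹ • v) := by
  rcases eq_or_ne v 0 with rfl | hv
  · simpa using hf 0 0
  · rw [hf, ← mul_assoc, ← mul_pow, mul_inv_cancel₀ (norm_ne_zero_iff.mpr hv), one_pow, one_mul]

variable [FiniteDimensional ℝ E]

lemma exists_pos_mul_norm_sq_le_of_homogeneous (hcont : Continuous f)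
    (hf : ∀ (c : ℝ) v, f (c • v) = c ^ 2 * f v) (hpos : ∀ v ≠ 0, 0 < f v) :
    ∃ c > 0, ∀ v, c * ‖v‖ ^ 2 ≤ f v := by
  cases subsingleton_or_nontrivial E
  · refine ⟨1, one_pos, fun v => ?_⟩
    rw [eq_norm_sq_mul_of_homogeneous hf v, Subsingleton.elim v 0]
    simp
  obtain ⟨v₀, hv₀, hmin⟩ := (isCompact_sphere (0 : E) 1).exists_isMinOn
    (NormedSpace.sphere_nonempty.mpr zero_le_one) hcont.continuousOn
  refine ⟨f v₀, hpos v₀ (ne_zero_of_mem_unit_sphere ⟨v₀, hv₀⟩), fun v => ?_⟩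
  rw [eq_norm_sq_mul_of_homogeneous hf v, mul_comm]
  rcases eq_or_ne v 0 with rfl | hv
  · simp
  · exact mul_le_mul_of_nonneg_left
      (hmin (mem_sphere_zero_iff_norm.mpr (norm_smul_inv_norm hv))) (sq_nonneg _)

lemma exists_le_mul_norm_sq_of_homogeneous (hcont : Continuous f)
    (hf : ∀ (c : ℝ) v, f (c • v) = c ^ 2 * f v) :
    ∃ C > 0, ∀ v, f v ≤ C * ‖v‖ ^ 2 := by
  obtain ⟨C, hC⟩ := (isCompact_sphere (0 : E) 1).exists_bound_of_continuousOn hcont.continuousOn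
  refine ⟨max C 1, by positivity, fun v => ?_⟩
  rw [eq_norm_sq_mul_of_homogeneous hf v, mul_comm]
  rcases eq_or_ne v 0 with rfl | hv
  · simp
  · gcongr
    have hbound := hC _ (mem_sphere_zero_iff_norm.mpr (norm_smul_inv_norm (𝕜 := ℝ) hv))
    exact (le_abs_self _).trans (hbound.trans (le_max_left _ _))

end Homogeneous

lemma EuclideanSpace.norm_toLp_sq {ι : Type*} [Fintype ι] (v : ι → ℝ) :
    ‖WithLp.toLp 2 v‖ ^ 2 = v ⬝ᵥ v := by
  rw [EuclideanSpace.norm_sq_eq]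
  simp [dotProduct, sq]

namespace Matrix

variable {ι : Type*} [Fintype ι]

lemma dotProduct_mulVec_self_eq_zero_of_transpose_eq_neg {S : Matrix ι ι ℝ} (hS : Sᵀ = -S)
    (v : ι → ℝ) : v ⬝ᵥ S *ᵥ v = 0 := by
  have : v ⬝ᵥ S *ᵥ v = -(v ⬝ᵥ S *ᵥ v) := by
    conv_lhs => rw [dotProduct_mulVec, ← mulVec_transpose, hS, neg_mulVec, dotProduct_comm,
      dotProduct_neg]
  linarith

lemma continuous_dotProduct_mulVec_self (M : Matrix ι ι ℝ) :
    Continuous fun w : EuclideanSpace ℝ ι => w.ofLp ⬝ᵥ M *ᵥ w.ofLp := by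
  fun_prop

lemma dotProduct_mulVec_self_smul (M : Matrix ι ι ℝ) (c : ℝ) (v : ι → ℝ) :
    (c • v) ⬝ᵥ M *ᵥ (c • v) = c ^ 2 * (v ⬝ᵥ M *ᵥ v) := by
  simp only [mulVec_smul, smul_dotProduct, dotProduct_smul, smul_eq_mul]
  ring

lemma PosDef.exists_pos_mul_dotProduct_self_le {M : Matrix ι ι ℝ} (hM : M.PosDef) :
    ∃ c > 0, ∀ v : ι → ℝ, c * (v ⬝ᵥ v) ≤ v ⬝ᵥ M *ᵥ v := by
  obtain ⟨c, hc, hcM⟩ := exists_pos_mul_norm_sq_le_of_homogeneous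
    (continuous_dotProduct_mulVec_self M) (fun c w => dotProduct_mulVec_self_smul M c w.ofLp)
    fun w hw => hM.dotProduct_mulVec_pos (by simpa using hw)
  exact ⟨c, hc, fun v => by simpa [EuclideanSpace.norm_toLp_sq] using hcM (WithLp.toLp 2 v)⟩

lemma exists_dotProduct_mulVec_self_le (M : Matrix ι ι ℝ) :
    ∃ C > 0, ∀ v : ι → ℝ, v ⬝ᵥ M *ᵥ v ≤ C * (v ⬝ᵥ v) := by
  obtain ⟨C, hC, hCM⟩ := exists_le_mul_norm_sq_of_homogeneous
    (continuous_dotProduct_mulVec_self M) (fun c w => dotProduct_mulVec_self_smul M c w.ofLp)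
  exact ⟨C, hC, fun v => by simpa [EuclideanSpace.norm_toLp_sq] using hCM (WithLp.toLp 2 v)⟩

lemma PosDef.transpose_mul_mul_self {R Q : Matrix ι ι ℝ} (hR : R.PosDef) (hQ : Q.PosDef) :
    (Qᵀ * R * Q).PosDef := by
  classical
  rw [← conjTranspose_eq_transpose_of_trivial]
  exact hR.conjTranspose_mul_mul_same (mulVec_injective_iff_isUnit.mpr hQ.isUnit)

lemma dotProduct_sub_mulVec_self_of_transpose_eq_neg {S : Matrix ι ι ℝ} (hS : Sᵀ = -S)
    (R : Matrix ι ι ℝ) (v : ι → ℝ) : v ⬝ᵥ (S - R) *ᵥ v = -(v ⬝ᵥ R *ᵥ v) := by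
  rw [sub_mulVec, dotProduct_sub, dotProduct_mulVec_self_eq_zero_of_transpose_eq_neg hS, zero_sub]

lemma mulVec_dotProduct_mulVec_mulVec (Q R : Matrix ι ι ℝ) (v : ι → ℝ) :
    Q *ᵥ v ⬝ᵥ R *ᵥ Q *ᵥ v = v ⬝ᵥ (Qᵀ * R * Q) *ᵥ v := by
  rw [← mulVec_mulVec, ← mulVec_mulVec, dotProduct_mulVec v Qᵀ, vecMul_transpose]

end Matrix

section Derivatives

variable {ι : Type*} [Fintype ι] {f g : ℝ → ι → ℝ} {f' g' : ι → ℝ} {t : ℝ}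

lemma HasDerivAt.dotProduct (hf : HasDerivAt f f' t) (hg : HasDerivAt g g' t) :
    HasDerivAt (fun s => f s ⬝ᵥ g s) (f' ⬝ᵥ g t + f t ⬝ᵥ g') t := by
  have := HasDerivAt.fun_sum (u := Finset.univ) fun i _ =>
    (hasDerivAt_pi.mp hf i).mul (hasDerivAt_pi.mp hg i)
  exact this.congr_deriv (Finset.sum_add_distrib.trans rfl)

lemma HasDerivAt.matrix_mulVec (M : Matrix ι ι ℝ) (hf : HasDerivAt f f' t) :
    HasDerivAt (fun s => M *ᵥ f s) (M *ᵥ f') t :=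
  M.mulVecLin.toContinuousLinearMap.hasFDerivAt.comp_hasDerivAt t hf

lemma HasDerivAt.dotProduct_mulVec_self {Q : Matrix ι ι ℝ} (hQ : Qᵀ = Q)
    (hf : HasDerivAt f f' t) :
    HasDerivAt (fun s => f s ⬝ᵥ Q *ᵥ f s) (2 * (Q *ᵥ f t ⬝ᵥ f')) t := by
  convert hf.dotProduct (hf.matrix_mulVec Q) using 1
  rw [dotProduct_comm f', dotProduct_mulVec, ← mulVec_transpose, hQ]
  ring

end Derivatives

lemma le_mul_exp_of_hasDerivAt_le_mul {V V' : ℝ → ℝ} {k : ℝ}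
    (hV : ∀ t ≥ 0, HasDerivAt V (V' t) t) (hV' : ∀ t ≥ 0, V' t ≤ k * V t) {t : ℝ} (ht : 0 ≤ t) :
    V t ≤ V 0 * exp (k * t) := by
  have := le_gronwallBound_of_liminf_deriv_right_le (f := V) (f' := V') (δ := V 0) (K := k)
    (ε := 0) (b := t) (fun s hs => (hV s hs.1).continuousAt.continuousWithinAt)
    (fun s hs r hr => (hV s hs.1).hasDerivWithinAt.liminf_right_slope_le hr) le_rfl
    (fun s hs => by simpa using hV' s hs.1) t ⟨ht, le_rfl⟩
  simpa [gronwallBound_ε0] using this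

lemma sqrt_le_mul_exp_mul_sqrt {a b q C α t : ℝ} (hq : 0 < q) (hC : 0 ≤ C)
    (h : q * a ≤ C * b * exp (-(2 * α) * t)) : √a ≤ √(C / q) * exp (-α * t) * √b := by
  have hsq : a ≤ (√(C / q) * exp (-α * t)) ^ 2 * b := by
    have hexp : exp (-α * t) ^ 2 = exp (-(2 * α) * t) := by rw [← Real.exp_nat_mul]; ring_nf
    rw [mul_pow, Real.sq_sqrt (by positivity), hexp, div_mul_eq_mul_div, div_mul_eq_mul_div,
      le_div_iff₀ hq]
    linarith
  calc √a ≤ √((√(C / q) * exp (-α * t)) ^ 2 * b) := Real.sqrt_le_sqrt hsq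
    _ = √(C / q) * exp (-α * t) * √b := by
      rw [Real.sqrt_mul (sq_nonneg _), Real.sqrt_sq (by positivity)]

theorem exists_exp_decay_of_hasDerivAt_skew_sub_mul {ι : Type*} [Fintype ι]
    {R Q : Matrix ι ι ℝ} (hR : R.PosDef) (hQ : Q.PosDef) :
    ∃ K > 0, ∃ α > 0, ∀ S : ℝ → Matrix ι ι ℝ, (∀ t, (S t)ᵀ = -S t) → ∀ e : ℝ → ι → ℝ,
      (∀ t ≥ 0, HasDerivAt e ((S t - R) *ᵥ Q *ᵥ e t) t) →
      ∀ t ≥ 0, √(e t ⬝ᵥ e t) ≤ K * exp (-α * t) * √(e 0 ⬝ᵥ e 0) := by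
  have hQsymm : Qᵀ = Q := by rw [← conjTranspose_eq_transpose_of_trivial]; exact hQ.isHermitian
  obtain ⟨c, hc, hcQRQ⟩ := (hR.transpose_mul_mul_self hQ).exists_pos_mul_dotProduct_self_le
  obtain ⟨q, hq, hqQ⟩ := hQ.exists_pos_mul_dotProduct_self_le
  obtain ⟨C, hC, hCQ⟩ := Q.exists_dotProduct_mulVec_self_le
  refine ⟨√(C / q), by positivity, c / C, by positivity, fun S hS e he t ht => ?_⟩
  have hdiss : ∀ s ≥ 0, 2 * (Q *ᵥ e s ⬝ᵥ (S s - R) *ᵥ Q *ᵥ e s)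
      ≤ -(2 * (c / C)) * (e s ⬝ᵥ Q *ᵥ e s) := by
    intro s _
    rw [dotProduct_sub_mulVec_self_of_transpose_eq_neg (hS s), mulVec_dotProduct_mulVec_mulVec]
    have hlow := hcQRQ (e s)
    have hup : c / C * (e s ⬝ᵥ Q *ᵥ e s) ≤ c * (e s ⬝ᵥ e s) := by
      rw [div_mul_eq_mul_div, div_le_iff₀ hC, mul_assoc]
      exact mul_le_mul_of_nonneg_left (hCQ (e s) |>.trans_eq (mul_comm _ _)) hc.le
    linarith
  have hV := le_mul_exp_of_hasDerivAt_le_mul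
    (fun s hs => (he s hs).dotProduct_mulVec_self hQsymm) hdiss ht
  refine sqrt_le_mul_exp_mul_sqrt hq hC.le ?_
  calc q * (e t ⬝ᵥ e t) ≤ e t ⬝ᵥ Q *ᵥ e t := hqQ (e t)
    _ ≤ (e 0 ⬝ᵥ Q *ᵥ e 0) * exp (-(2 * (c / C)) * t) := hV
    _ ≤ C * (e 0 ⬝ᵥ e 0) * exp (-(2 * (c / C)) * t) := by gcongr; exact hCQ (e 0)

theorem emulator_exponential_convergence_general {n m : ℕ}
    (J₀ : Matrix (Fin n) (Fin n) ℝ) (J : Fin m → Matrix (Fin n) (Fin n) ℝ)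
    (R Q G₀ : Matrix (Fin n) (Fin n) ℝ) (G : Fin m → Matrix (Fin n) (Fin n) ℝ)
    (E : Fin n → ℝ)
    (hJ₀ : J₀ᵀ = -J₀) (hJ : ∀ i, (J i)ᵀ = -(J i))
    (hR : R.PosDef) (hQ : Q.PosDef)
    (u : ℝ → Fin m → ℝ)
    (x ξ : ℝ → Fin n → ℝ)
    (hx : ∀ t ≥ (0:ℝ), HasDerivAt x
      ((J₀ + ∑ i, u t i • J i - R).mulVec (Q.mulVec (x t))
        + (G₀ + ∑ i, u t i • G i).mulVec E) t)
    (hξ : ∀ t ≥ (0:ℝ), HasDerivAt ξ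
      ((J₀ + ∑ i, u t i • J i - R).mulVec (Q.mulVec (ξ t))
        + (G₀ + ∑ i, u t i • G i).mulVec E) t) :
    ∃ K > (0:ℝ), ∃ α > (0:ℝ), ∀ t ≥ (0:ℝ),
      Real.sqrt ((x t - ξ t) ⬝ᵥ (x t - ξ t))
        ≤ K * Real.exp (-α * t) * Real.sqrt ((x 0 - ξ 0) ⬝ᵥ (x 0 - ξ 0)) := by
  obtain ⟨K, hK, α, hα, hdecay⟩ := exists_exp_decay_of_hasDerivAt_skew_sub_mul hR hQ
  refine ⟨K, hK, α, hα, hdecay (fun t => J₀ + ∑ i, u t i • J i) (fun t => ?_) (x - ξ) ?_⟩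
  · simp only [transpose_add, transpose_sum, transpose_smul, hJ₀, hJ, smul_neg,
      Finset.sum_neg_distrib, neg_add]
  · intro t ht
    refine ((hx t ht).sub (hξ t ht)).congr_deriv ?_
    rw [add_sub_add_right_eq_sub, ← mulVec_sub, ← mulVec_sub]
    rfl

/-- Exponential convergence of the open-loop emulator. Any two solutions
`x`, `ξ` of the converter dynamics satisfy `|x(t) − ξ(t)| ≤ K e^{−αt}|x(0) − ξ(0)|` for
some `K, α > 0` depending only on `Q` and `R` (Euclidean norm). -/
theorem emulator_exponential_convergence {n m : ℕ}
    (J₀ : Matrix (Fin n) (Fin n) ℝ) (J : Fin m → Matrix (Fin n) (Fin n) ℝ)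
    (R Q G₀ : Matrix (Fin n) (Fin n) ℝ) (G : Fin m → Matrix (Fin n) (Fin n) ℝ)
    (E : Fin n → ℝ)
    (hJ₀ : J₀ᵀ = -J₀) (hJ : ∀ i, (J i)ᵀ = -(J i))
    (hR : R.PosDef) (hQ : Q.PosDef) (hQdiag : Q.IsDiag)
    (u : ℝ → Fin m → ℝ) (hu : Continuous u)
    (x ξ : ℝ → Fin n → ℝ)
    (hx : ∀ t ≥ (0:ℝ), HasDerivAt x
      ((J₀ + ∑ i, u t i • J i - R).mulVec (Q.mulVec (x t))
        + (G₀ + ∑ i, u t i • G i).mulVec E) t)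
    (hξ : ∀ t ≥ (0:ℝ), HasDerivAt ξ
      ((J₀ + ∑ i, u t i • J i - R).mulVec (Q.mulVec (ξ t))
        + (G₀ + ∑ i, u t i • G i).mulVec E) t) :
    ∃ K > (0:ℝ), ∃ α > (0:ℝ), ∀ t ≥ (0:ℝ),
      Real.sqrt ((x t - ξ t) ⬝ᵥ (x t - ξ t))
        ≤ K * Real.exp (-α * t) * Real.sqrt ((x 0 - ξ 0) ⬝ᵥ (x 0 - ξ 0)) :=
  emulator_exponential_convergence_general J₀ J R Q G₀ G E hJ₀ hJ hR hQ u x ξ hx hξ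
end
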